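/- Let U = U_n·U_{n−1}·⋯·U_1 (n ≥ 1) be a product of letters U_k, each equal to some S_j or some S_jᵀ, which is in normal form, meaning: (i) U_k ≠ U_{k−1} for 2 ≤ k ≤ n, and (ii) whenever U_k = S_jᵀ for some j, then U_{k−1} ≠ S_i for every i ≠ j. Then the sum of all sixteen entries of the matrix U is at least 8; moreover if n ≥ 2 this entry sum is strictly greater than the entry sum of U_{n−1}·⋯·U_1. In particular U ≠ I, so no nonempty normal-form word in the generators of the super-Apollonian group equals the identity. -/

import Mathlib

open Matrix

/-- The Apollonian generators `S₁, S₂, S₃, S₄`. -/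
noncomputable def S : Fin 4 → Matrix (Fin 4) (Fin 4) ℝ := fun i =>
  Matrix.of fun j k =>
    if j = i then (if k = i then -1 else 2) else (if j = k then 1 else 0)

/-- A letter of the super-Apollonian group: `(j, false)` denotes `S j` and
`(j, true)` denotes the dual generator `S jᵀ`. -/
noncomputable def gen : Fin 4 × Bool → Matrix (Fin 4) (Fin 4) ℝ :=
  fun a => if a.2 then (S a.1)ᵀ else S a.1

/-- The normal form condition on an adjacent pair of letters `a, b`, where `a`
is immediately to the left of `b` in the word (i.e. `a = U_k`, `b = U_{k-1}`):
(i) `a ≠ b`, and (ii) if `a = S jᵀ` then `b` is not `S i` for any `i ≠ j`. -/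
def NormalRel : Fin 4 × Bool → Fin 4 × Bool → Prop := fun a b =>
  a ≠ b ∧ (a.2 = true → b.2 = false → b.1 = a.1)

/-- The sum of all sixteen entries of a `4 × 4` matrix. -/
noncomputable def entrySum (U : Matrix (Fin 4) (Fin 4) ℝ) : ℝ :=
  ∑ i, ∑ j, U i j

/-! The whole argument runs on the row-sum vector `v = U 𝟙`, whose coordinates add up to the
entry sum of `U`. Multiplying `U` on the left by `Sᵢ` replaces `vᵢ` by `2 Σ v - 3 vᵢ`, and by
`Sᵢᵀ` replaces `vᵢ` by `-vᵢ` and adds `2 vᵢ` to the other coordinates, so the entry sum changes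
by `2 (Σ v - 2 vᵢ)` and `4 vᵢ` respectively. Along a normal-form word, read from the right, the
vector keeps all pairwise sums positive, has `2 vₘ < Σ v` off the coordinate of the last letter
applied, and has that coordinate positive after an `Sᵢ` and negative after an `Sᵢᵀ`; the normal
form rules are exactly what makes every increment positive. A single letter gives entry sum 8. -/

variable (v : Fin 4 → ℝ)

lemma entrySum_eq_sum_mulVec_one (U : Matrix (Fin 4) (Fin 4) ℝ) :
    entrySum U = ∑ i, (U *ᵥ 1) i := by
  simp [entrySum, mulVec, dotProduct]

lemma S_mulVec_apply (i k : Fin 4) :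
    (S i *ᵥ v) k = if k = i then 2 * ∑ j, v j - 3 * v i else v k := by
  fin_cases i <;> fin_cases k <;> simp [S, mulVec, dotProduct, Fin.sum_univ_four] <;> ring

lemma S_transpose_mulVec_apply (i k : Fin 4) :
    ((S i)ᵀ *ᵥ v) k = if k = i then -v i else v k + 2 * v i := by
  fin_cases i <;> fin_cases k <;> simp [S, mulVec, dotProduct, Fin.sum_univ_four] <;> ring

lemma sum_S_mulVec (i : Fin 4) : ∑ k, (S i *ᵥ v) k = 3 * ∑ k, v k - 4 * v i := by
  simp only [S_mulVec_apply]
  fin_cases i <;> simp [Fin.sum_univ_four] <;> ring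

lemma sum_S_transpose_mulVec (i : Fin 4) : ∑ k, ((S i)ᵀ *ᵥ v) k = ∑ k, v k + 4 * v i := by
  simp only [S_transpose_mulVec_apply]
  fin_cases i <;> simp [Fin.sum_univ_four] <;> ring

def PairwisePos : Prop := ∀ k m, k ≠ m → 0 < v k + v m

namespace PairwisePos

variable {v}

lemma sum_pos (hv : PairwisePos v) : 0 < ∑ k, v k := by
  have h01 := hv 0 1 (by decide)
  have h23 := hv 2 3 (by decide)
  rw [Fin.sum_univ_four]
  linarith

lemma add_lt_sum (hv : PairwisePos v) {j m : Fin 4} (hjm : j ≠ m) : v j + v m < ∑ k, v k := by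
  have h01 := hv 0 1 (by decide); have h02 := hv 0 2 (by decide)
  have h03 := hv 0 3 (by decide); have h12 := hv 1 2 (by decide)
  have h13 := hv 1 3 (by decide); have h23 := hv 2 3 (by decide)
  rw [Fin.sum_univ_four]
  fin_cases j <;> fin_cases m <;> simp at hjm ⊢ <;> linarith

lemma S_mulVec (hv : PairwisePos v) {j : Fin 4} (hj : 2 * v j < ∑ k, v k) :
    PairwisePos (S j *ᵥ v) := by
  intro k m hkm
  have hkm' := hv k m hkm
  simp only [S_mulVec_apply]
  split_ifs <;> subst_vars <;> first | exact absurd rfl hkm | linarith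

lemma S_transpose_mulVec (hv : PairwisePos v) {j : Fin 4} (hj : 0 < v j) :
    PairwisePos ((S j)ᵀ *ᵥ v) := by
  intro k m hkm
  have hkm' := hv k m hkm
  simp only [S_transpose_mulVec_apply]
  split_ifs <;> subst_vars <;> first | exact absurd rfl hkm | linarith

end PairwisePos

/-- The invariant of the row-sum vector of a normal-form word whose leftmost letter is `a`. -/
structure AfterLetter (a : Fin 4 × Bool) : Prop where
  pairwisePos : PairwisePos v
  two_mul_lt_sum : ∀ m, m ≠ a.1 → 2 * v m < ∑ k, v k
  neg_of_dual : a.2 = true → v a.1 < 0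
  pos_of_primal : a.2 = false → 0 < v a.1

/-- The conditions under which left multiplication by the letter `a` preserves the invariant
and increases the coordinate sum. -/
def Admits (a : Fin 4 × Bool) : Prop :=
  PairwisePos v ∧
    if a.2 then 0 < v a.1 ∧ ∀ m, m ≠ a.1 → 2 * v m < ∑ k, v k else 2 * v a.1 < ∑ k, v k

lemma admits_one (a : Fin 4 × Bool) : Admits 1 a := by
  refine ⟨fun _ _ _ => by norm_num, ?_⟩
  cases a.2 <;> norm_num

namespace Admits

variable {v}

lemma afterLetter_gen_mulVec {a : Fin 4 × Bool} (h : Admits v a) :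
    AfterLetter (gen a *ᵥ v) a := by
  obtain ⟨j, _ | _⟩ := a <;> obtain ⟨hv, hj⟩ := h <;>
    simp only [gen, Bool.false_eq_true, if_false, if_true] at hj ⊢
  · refine ⟨hv.S_mulVec hj, fun m hm => ?_, by simp, fun _ => ?_⟩
    · have := hv.add_lt_sum hm
      rw [S_mulVec_apply, if_neg hm, sum_S_mulVec]
      linarith
    · have := hv.sum_pos
      rw [S_mulVec_apply, if_pos rfl]
      linarith
  · refine ⟨hv.S_transpose_mulVec hj.1, fun m hm => ?_, fun _ => ?_, by simp⟩
    · have := hj.2 m hm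
      rw [S_transpose_mulVec_apply, if_neg hm, sum_S_transpose_mulVec]
      linarith
    · rw [S_transpose_mulVec_apply, if_pos rfl]
      linarith [hj.1]

lemma sum_lt_sum_gen_mulVec {a : Fin 4 × Bool} (h : Admits v a) :
    ∑ k, v k < ∑ k, (gen a *ᵥ v) k := by
  obtain ⟨j, _ | _⟩ := a <;> obtain ⟨hv, hj⟩ := h <;>
    simp only [gen, Bool.false_eq_true, if_false, if_true] at hj ⊢
  · rw [sum_S_mulVec]; linarith
  · rw [sum_S_transpose_mulVec]; linarith [hj.1]

end Admits

/-- Condition (i) of the normal form forbids `Sⱼ Sⱼ` and `Sⱼᵀ Sⱼᵀ`, condition (ii) forbids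
`Sⱼᵀ Sᵢ` with `i ≠ j`. -/
lemma AfterLetter.admits {a b : Fin 4 × Bool} {v : Fin 4 → ℝ} (h : AfterLetter v b)
    (hab : NormalRel a b) : Admits v a := by
  obtain ⟨hne, hdual⟩ := hab
  obtain ⟨i, s⟩ := b
  obtain ⟨j, t⟩ := a
  have hsum := h.pairwisePos.sum_pos
  refine ⟨h.pairwisePos, ?_⟩
  have two_mul_lt (m : Fin 4) (hm : m ≠ i ∨ s = true) : 2 * v m < ∑ k, v k := by
    rcases eq_or_ne m i with rfl | hmi
    · linarith [h.neg_of_dual (hm.resolve_left (not_not.mpr rfl))]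
    · exact h.two_mul_lt_sum m hmi
  cases t <;> simp only [if_true, Bool.false_eq_true, if_false]
  · exact two_mul_lt j (by cases s <;> simp_all)
  · cases s
    · obtain rfl : i = j := hdual rfl rfl
      exact ⟨h.pos_of_primal rfl, fun m hm => two_mul_lt m (Or.inl hm)⟩
    · have hij : i ≠ j := by rintro rfl; exact hne rfl
      exact ⟨by linarith [h.pairwisePos i j hij, h.neg_of_dual rfl],
        fun m _ => two_mul_lt m (Or.inr rfl)⟩

lemma admits_prod_mulVec_one (a : Fin 4 × Bool) (l : List (Fin 4 × Bool))
    (hl : (a :: l).IsChain NormalRel) : Admits ((l.map gen).prod *ᵥ 1) a := by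
  induction l generalizing a with
  | nil => simpa using admits_one a
  | cons b l ih =>
    rw [List.isChain_cons_cons] at hl
    have hb := (ih b hl.2).afterLetter_gen_mulVec
    rw [mulVec_mulVec] at hb
    exact hb.admits hl.1

lemma entrySum_lt_entrySum_cons (a : Fin 4 × Bool) (l : List (Fin 4 × Bool))
    (hl : (a :: l).IsChain NormalRel) :
    entrySum (l.map gen).prod < entrySum ((a :: l).map gen).prod := by
  have := (admits_prod_mulVec_one a l hl).sum_lt_sum_gen_mulVec
  rwa [mulVec_mulVec, ← entrySum_eq_sum_mulVec_one, ← entrySum_eq_sum_mulVec_one] at this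

lemma entrySum_gen (a : Fin 4 × Bool) : entrySum (gen a) = 8 := by
  obtain ⟨j, _ | _⟩ := a <;>
    simp [entrySum_eq_sum_mulVec_one, gen, sum_S_mulVec, sum_S_transpose_mulVec] <;> norm_num

lemma entrySum_one : entrySum (1 : Matrix (Fin 4) (Fin 4) ℝ) = 4 := by
  simp [entrySum, Matrix.one_apply]

lemma eight_le_entrySum (l : List (Fin 4 × Bool)) (hne : l ≠ []) (hl : l.IsChain NormalRel) :
    8 ≤ entrySum (l.map gen).prod := by
  induction l with
  | nil => exact absurd rfl hne
  | cons a l ih =>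
    cases l with
    | nil => simp [entrySum_gen]
    | cons b l =>
      have := ih (List.cons_ne_nil b l) hl.tail
      linarith [entrySum_lt_entrySum_cons a _ hl]

/-- A nonempty normal-form word `U = U_n ⋯ U_1` in the generators of the
super-Apollonian group (written as a list with leftmost letter first) has
entry sum at least `8`; if `n ≥ 2` the entry sum strictly exceeds that of
`U_{n-1} ⋯ U_1`; in particular `U ≠ I`. -/
theorem normal_form_word_ne_one
    (l : List (Fin 4 × Bool)) (hne : l ≠ []) (hnf : l.Chain' NormalRel) :
    8 ≤ entrySum ((l.map gen).prod) ∧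
    (2 ≤ l.length →
      entrySum ((l.tail.map gen).prod) < entrySum ((l.map gen).prod)) ∧
    (l.map gen).prod ≠ 1 := by
  have h8 := eight_le_entrySum l hne hnf
  obtain ⟨a, l, rfl⟩ := List.exists_cons_of_ne_nil hne
  refine ⟨h8, fun _ => entrySum_lt_entrySum_cons a l hnf, fun h => ?_⟩
  rw [h, entrySum_one] at h8
  norm_num at h8
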